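/- There is no map function Equal^∧Map for the equality lifting in general: it is not the case that for all types A B, predicates Q_A Q_A' : A → Set and Q_B Q_B' : B → Set, morphisms of predicates ∀ a → Q_A a → Q_A' a and ∀ b → Q_B b → Q_B' b, and e : Equal A B, the lifting Equal^∧ A B Q_A Q_B e implies Equal^∧ A B Q_A' Q_B' e. Concretely, taking A = B, e = refl, Q_A = Q_B = K_⊤ (constantly ⊤), Q_A' = K_⊤, and Q_B' = K_Empty (constantly Empty), the morphism requirements are satisfiable, Equal^∧ A A K_⊤ K_⊤ refl is inhabited, but Equal^∧ A A K_⊤ K_Empty refl is empty when A is inhabited. -/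

import Mathlib

namespace DeepInd

/-- The equality GADT: proof-relevant type equality, with single constructor `refl`. -/
inductive Equal (A : Type) : Type → Type where
  | refl : Equal A A

/-- Predicate lifting for `Equal`: the two predicates are pointwise equal as types. -/
def EqualLift {A B : Type} (QA : A → Type) (QB : B → Type) : Equal A B → Type
  | .refl => ∀ a : A, Equal (QA a) (QB a)

/-- The constantly ⊤-valued predicate. -/
def KTop {A : Type} : A → Type := fun _ => PUnit

theorem Equal.eq {A B : Type} : Equal A B → A = B
  | .refl => rfl

theorem isEmpty_equal_of_isEmpty_of_nonempty {A B : Type} [IsEmpty A] [Nonempty B] :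
    IsEmpty (Equal A B) :=
  ⟨fun e => IsEmpty.false (cast e.eq.symm (Classical.arbitrary B))⟩

def EqualLift.reflSelf {A : Type} (Q : A → Type) : EqualLift Q Q .refl :=
  fun _ => .refl

theorem isEmpty_equalLift_empty_kTop {A : Type} [Nonempty A] :
    IsEmpty (EqualLift (fun _ : A => Empty) KTop .refl) :=
  ⟨fun lift => (isEmpty_equal_of_isEmpty_of_nonempty (A := Empty) (B := PUnit)).false
    (lift (Classical.arbitrary A))⟩

/-- There is no map function `Equal^∧Map` for the equality lifting in
general. -/
theorem no_equalLift_map :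
    ¬ ∀ (A B : Type) (QA QA' : A → Type) (QB QB' : B → Type) (e : Equal A B),
        (∀ a : A, QA a → QA' a) → (∀ b : B, QB b → QB' b) →
        (EqualLift QA QB e → Nonempty (EqualLift QA' QB' e)) := by
  intro map
  obtain ⟨lift⟩ := map PUnit PUnit (fun _ => Empty) (fun _ => Empty) (fun _ => Empty) KTop
    .refl (fun _ => id) (fun _ => Empty.elim) (EqualLift.reflSelf _)
  exact isEmpty_equalLift_empty_kTop.false lift

end DeepInd
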